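/- arXiv:0906.4321 — 4 statements merged into one kernel-verified Lean document; each statement's English description precedes it below -/
import Mathlib

section
/- (Substitution) If Φ is countably infinite and the sentence φ is valid in the class of all extended awareness structures over Φ, then for any primitive proposition q and any quantifier-free sentence ψ (possibly mentioning q), φ[q/ψ] is valid. -/
namespace AwarenessPaper

/-- Formulas of the language `ℒ^{∀,K,X,A}_n(Φ,𝒳)` with `Φ = ℕ` (countably infinite
set of primitive propositions) and variables indexed by `ℕ`; agents indexed by `ℕ`. -/
inductive Fm : Type
  | prop : ℕ → Fm
  | var  : ℕ → Fm
  | neg  : Fm → Fm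
  | and  : Fm → Fm → Fm
  | k    : ℕ → Fm → Fm
  | a    : ℕ → Fm → Fm
  | x    : ℕ → Fm → Fm
  | all  : ℕ → Fm → Fm

namespace Fm

/-- Primitive propositions occurring in a formula. -/
def props : Fm → Set ℕ
  | .prop p => {p}
  | .var _ => ∅
  | .neg φ => props φ
  | .and φ ψ => props φ ∪ props ψ
  | .k _ φ => props φ
  | .a _ φ => props φ
  | .x _ φ => props φ
  | .all _ φ => props φ

/-- Free variables of a formula. -/
def free : Fm → Set ℕ
  | .prop _ => ∅
  | .var v => {v}
  | .neg φ => free φ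
  | .and φ ψ => free φ ∪ free ψ
  | .k _ φ => free φ
  | .a _ φ => free φ
  | .x _ φ => free φ
  | .all v φ => free φ \ {v}

/-- All variables occurring in a formula (free or bound). -/
def vars : Fm → Set ℕ
  | .prop _ => ∅
  | .var v => {v}
  | .neg φ => vars φ
  | .and φ ψ => vars φ ∪ vars ψ
  | .k _ φ => vars φ
  | .a _ φ => vars φ
  | .x _ φ => vars φ
  | .all v φ => insert v (vars φ)

/-- Quantifier nesting depth; a formula is quantifier-free iff `qcount φ = 0`. -/
def qcount : Fm → ℕ
  | .prop _ => 0
  | .var _ => 0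
  | .neg φ => qcount φ
  | .and φ ψ => max (qcount φ) (qcount ψ)
  | .k _ φ => qcount φ
  | .a _ φ => qcount φ
  | .x _ φ => qcount φ
  | .all _ φ => qcount φ + 1

/-- `substV v ψ φ` is `φ[x_v/ψ]`: replace free occurrences of variable `v` by `ψ`. -/
def substV (v : ℕ) (ψ : Fm) : Fm → Fm
  | .prop p => .prop p
  | .var u => if u = v then ψ else .var u
  | .neg φ => .neg (substV v ψ φ)
  | .and φ₁ φ₂ => .and (substV v ψ φ₁) (substV v ψ φ₂)
  | .k i φ => .k i (substV v ψ φ)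
  | .a i φ => .a i (substV v ψ φ)
  | .x i φ => .x i (substV v ψ φ)
  | .all u φ => if u = v then .all u φ else .all u (substV v ψ φ)

/-- `substP q ψ φ` is `φ[q/ψ]`: replace the primitive proposition `q` by `ψ`. -/
def substP (q : ℕ) (ψ : Fm) : Fm → Fm
  | .prop p => if p = q then ψ else .prop p
  | .var u => .var u
  | .neg φ => .neg (substP q ψ φ)
  | .and φ₁ φ₂ => .and (substP q ψ φ₁) (substP q ψ φ₂)
  | .k i φ => .k i (substP q ψ φ)
  | .a i φ => .a i (substP q ψ φ)
  | .x i φ => .x i (substP q ψ φ)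
  | .all u φ => .all u (substP q ψ φ)

/-- Rename primitive propositions along `τ`. -/
def rename (τ : ℕ → ℕ) : Fm → Fm
  | .prop p => .prop (τ p)
  | .var u => .var u
  | .neg φ => .neg (rename τ φ)
  | .and φ₁ φ₂ => .and (rename τ φ₁) (rename τ φ₂)
  | .k i φ => .k i (rename τ φ)
  | .a i φ => .a i (rename τ φ)
  | .x i φ => .x i (rename τ φ)
  | .all u φ => .all u (rename τ φ)

def or (φ ψ : Fm) : Fm := .neg (.and (.neg φ) (.neg ψ))
def imp (φ ψ : Fm) : Fm := Fm.or (.neg φ) ψ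
def iff (φ ψ : Fm) : Fm := .and (imp φ ψ) (imp ψ φ)
/-- `A_i^* φ`, an abbreviation for `K_i (φ ∨ ¬φ)`. -/
def astar (i : ℕ) (φ : Fm) : Fm := .k i (Fm.or φ (.neg φ))

end Fm

/-- An extended awareness structure for agents `ℕ` over `Φ = ℕ`, with set of worlds `W`:
each world has a nonempty local language `L s`, a valuation, possibility relations `R i`,
and awareness sets `Aw i s` consisting of formulas over the local language. -/
structure EAS (W : Type) where
  L : W → Set ℕ
  L_ne : ∀ s, (L s).Nonempty
  val : W → ℕ → Bool
  R : ℕ → W → W → Prop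
  Aw : ℕ → W → Set Fm
  Aw_lang : ∀ i s, ∀ φ ∈ Aw i s, Fm.props φ ⊆ L s

namespace EAS

variable {W : Type}

/-- One level of the truth definition; `univ` interprets the bodies of quantifiers
(at one lower quantifier depth).  A formula is true at `s` only if its primitive
propositions all belong to the local language `L s`. -/
def satAux (M : EAS W) (univ : W → Fm → Prop) : W → Fm → Prop
  | s, .prop p => p ∈ M.L s ∧ M.val s p = true
  | _, .var _ => False
  | s, .neg φ => Fm.props φ ⊆ M.L s ∧ ¬ satAux M univ s φ
  | s, .and φ ψ => satAux M univ s φ ∧ satAux M univ s ψ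
  | s, .k i φ => Fm.props φ ⊆ M.L s ∧ ∀ t, M.R i s t → satAux M univ t φ
  | s, .a i φ => φ ∈ M.Aw i s
  | s, .x i φ => (Fm.props φ ⊆ M.L s ∧ ∀ t, M.R i s t → satAux M univ t φ) ∧ φ ∈ M.Aw i s
  | s, .all v φ => Fm.props φ ⊆ M.L s ∧
      ∀ β : Fm, Fm.qcount β = 0 → Fm.free β = ∅ → Fm.props β ⊆ M.L s →
        univ s (Fm.substV v β φ)

/-- Truth with quantifier-depth budget `n`. -/
def satN (M : EAS W) : ℕ → W → Fm → Prop
  | 0 => M.satAux fun _ _ => False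
  | n + 1 => M.satAux (M.satN n)

/-- `(M,s) ⊨ φ`. Quantifiers range over quantifier-free sentences of the local language. -/
def sat (M : EAS W) (s : W) (φ : Fm) : Prop := M.satN (Fm.qcount φ) s φ

/-- Awareness is generated by primitive propositions. -/
def agpp (M : EAS W) : Prop :=
  ∀ i s (φ : Fm), φ ∈ M.Aw i s ↔ ∀ p ∈ Fm.props φ, Fm.prop p ∈ M.Aw i s

/-- Agents know what they are aware of. -/
def ka (M : EAS W) : Prop := ∀ i s t, M.R i s t → M.Aw i s = M.Aw i t

end EAS

/-- (Weak) validity in the class `𝒩_n(Φ,𝒳)` of all extended awareness structures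
satisfying agpp and ka: truth at every world whose local language contains all the
primitive propositions of the formula. -/
def Valid (φ : Fm) : Prop :=
  ∀ (W : Type) (M : EAS W), M.agpp → M.ka → ∀ s : W, Fm.props φ ⊆ M.L s → M.sat s φ

/-!
Reinterpret each primitive `p` of a structure `M` as a quantifier-free sentence `σ p`: `p`
belongs to the local language where the primitives of `σ p` do, is true where `σ p` is, and an
agent is aware of `p` where she is aware of every primitive of `σ p`. This preserves agpp and ka,
and `χ` holds in the new structure exactly where `χ[σ]` holds in `M`. For the quantifier step
every quantifier-free sentence of `M`'s language has to be some `β[σ]`, which holds as soon as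
every primitive is some `σ p`. To obtain `φ[q/ψ]`, let `σ` send `q` to `ψ`, fix the other
primitives up to a bound `N` on those of `φ`, and let the primitives above `N` enumerate all
primitives; this is where the infinity of `Φ` is used.
-/

namespace Fm

def subst (σ : ℕ → Fm) : Fm → Fm
  | .prop p => σ p
  | .var u => .var u
  | .neg φ => .neg (subst σ φ)
  | .and φ₁ φ₂ => .and (subst σ φ₁) (subst σ φ₂)
  | .k i φ => .k i (subst σ φ)
  | .a i φ => .a i (subst σ φ)
  | .x i φ => .x i (subst σ φ)
  | .all u φ => .all u (subst σ φ)

variable {σ : ℕ → Fm}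

theorem props_finite (χ : Fm) : χ.props.Finite := by
  induction χ with
  | prop p => exact Set.finite_singleton p
  | var => exact Set.finite_empty
  | and _ _ ih₁ ih₂ => exact ih₁.union ih₂
  | neg _ ih | k _ _ ih | a _ _ ih | x _ _ ih | all _ _ ih => exact ih

theorem props_subst (χ : Fm) : (subst σ χ).props = ⋃ p ∈ χ.props, (σ p).props := by
  induction χ with
  | prop p => simp [subst, props]
  | var => simp [subst, props]
  | and _ _ ih₁ ih₂ => simp only [subst, props, ih₁, ih₂, Set.biUnion_union]
  | neg _ ih | k _ _ ih | a _ _ ih | x _ _ ih | all _ _ ih => simpa only [subst, props] using ih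

theorem qcount_subst (hσ : ∀ p, (σ p).qcount = 0) (χ : Fm) :
    (subst σ χ).qcount = χ.qcount := by
  induction χ with
  | prop p => exact hσ p
  | var => rfl
  | and _ _ ih₁ ih₂ => simp only [subst, qcount, ih₁, ih₂]
  | neg _ ih | k _ _ ih | a _ _ ih | x _ _ ih | all _ _ ih => simp only [subst, qcount, ih]

theorem free_subst (hσ : ∀ p, (σ p).free = ∅) (χ : Fm) : (subst σ χ).free = χ.free := by
  induction χ with
  | prop p => exact hσ p
  | var => rfl
  | and _ _ ih₁ ih₂ => simp only [subst, free, ih₁, ih₂]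
  | neg _ ih | k _ _ ih | a _ _ ih | x _ _ ih | all _ _ ih => simp only [subst, free, ih]

theorem substV_of_notMem_free {v : ℕ} (β : Fm) {χ : Fm} (hv : v ∉ χ.free) :
    substV v β χ = χ := by
  induction χ with
  | prop => rfl
  | var u =>
    have : u ≠ v := by rintro rfl; exact hv rfl
    simp [substV, this]
  | and _ _ ih₁ ih₂ =>
    simp only [free, Set.mem_union, not_or] at hv
    simp only [substV, ih₁ hv.1, ih₂ hv.2]
  | neg _ ih | k _ _ ih | a _ _ ih | x _ _ ih => simp only [substV, ih hv]
  | all u φ ih =>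
    by_cases hu : u = v
    · simp [substV, hu]
    · have : v ∉ φ.free := fun h => hv ⟨h, Ne.symm hu⟩
      simp [substV, hu, ih this]

theorem subst_substV (hσ : ∀ p, (σ p).free = ∅) (v : ℕ) (β χ : Fm) :
    subst σ (substV v β χ) = substV v (subst σ β) (subst σ χ) := by
  induction χ with
  | prop p => simp [subst, substV, substV_of_notMem_free _ (show v ∉ (σ p).free by simp [hσ p])]
  | var u => by_cases hu : u = v <;> simp [subst, substV, hu]
  | and _ _ ih₁ ih₂ => simp only [subst, substV, ih₁, ih₂]
  | neg _ ih | k _ _ ih | a _ _ ih | x _ _ ih => simp only [subst, substV, ih]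
  | all u _ ih => by_cases hu : u = v <;> simp [subst, substV, hu, ih]

theorem subst_subst_of_rightInverse {g : ℕ → ℕ} (hg : ∀ x, σ (g x) = .prop x) (χ : Fm) :
    subst σ (subst (prop ∘ g) χ) = χ := by
  induction χ with
  | prop p => exact hg p
  | var => rfl
  | and _ _ ih₁ ih₂ => simp only [subst, ih₁, ih₂]
  | neg _ ih | k _ _ ih | a _ _ ih | x _ _ ih | all _ _ ih => simp only [subst, ih]

theorem subst_congr {τ : ℕ → Fm} {χ : Fm} (h : ∀ p ∈ χ.props, σ p = τ p) :
    subst σ χ = subst τ χ := by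
  induction χ with
  | prop p => exact h p rfl
  | var => rfl
  | and _ _ ih₁ ih₂ =>
    simp only [subst, ih₁ fun p hp => h p (Or.inl hp), ih₂ fun p hp => h p (Or.inr hp)]
  | neg _ ih | k _ _ ih | a _ _ ih | x _ _ ih | all _ _ ih => simp only [subst, ih h]

theorem substP_eq_subst (q : ℕ) (ψ χ : Fm) :
    substP q ψ χ = subst (Function.update prop q ψ) χ := by
  induction χ with
  | prop p => by_cases hp : p = q <;> simp [substP, subst, hp]
  | var => rfl
  | and _ _ ih₁ ih₂ => simp only [substP, subst, ih₁, ih₂]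
  | neg _ ih | k _ _ ih | a _ _ ih | x _ _ ih | all _ _ ih => simp only [substP, subst, ih]

end Fm

namespace EAS

variable {W : Type} (M : EAS W)

theorem props_subset_of_satAux {u : W → Fm → Prop} {χ : Fm} {t : W} (h : M.satAux u t χ) :
    χ.props ⊆ M.L t := by
  induction χ generalizing t with
  | prop p => exact Set.singleton_subset_iff.2 h.1
  | var => exact h.elim
  | and _ _ ih₁ ih₂ => exact Set.union_subset (ih₁ h.1) (ih₂ h.2)
  | neg _ _ | k _ _ _ | all _ _ _ => exact h.1
  | a i φ _ => exact M.Aw_lang i t φ h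
  | x _ _ _ => exact h.1.1

theorem satAux_congr_of_qcount_eq_zero (u₁ u₂ : W → Fm → Prop) {χ : Fm} (hχ : χ.qcount = 0)
    (t : W) : M.satAux u₁ t χ ↔ M.satAux u₂ t χ := by
  induction χ generalizing t with
  | prop | var | a => rfl
  | neg _ ih => simp only [satAux, ih hχ]
  | and _ _ ih₁ ih₂ =>
    simp only [Fm.qcount, Nat.max_eq_zero_iff] at hχ
    simp only [satAux, ih₁ hχ.1, ih₂ hχ.2]
  | k _ _ ih | x _ _ ih => simp only [satAux, ih hχ]
  | all => simp [Fm.qcount] at hχ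

open Classical in
noncomputable def comap (σ : ℕ → Fm) (hσ : ∀ x, ∃ p, σ p = .prop x) : EAS W where
  L t := {p | (σ p).props ⊆ M.L t}
  L_ne t := by
    obtain ⟨x, hx⟩ := M.L_ne t
    obtain ⟨p, hp⟩ := hσ x
    exact ⟨p, by simpa [hp, Fm.props] using hx⟩
  val t p := decide (M.satN 0 t (σ p))
  R := M.R
  Aw i t := {χ | ∀ p ∈ χ.props, ∀ x ∈ (σ p).props, .prop x ∈ M.Aw i t}
  Aw_lang i t _ hχ p hp x hx := by
    simpa [Fm.props] using M.Aw_lang i t _ (hχ p hp x hx)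

variable {M} {σ : ℕ → Fm} {hσ : ∀ x, ∃ p, σ p = .prop x}

theorem props_subset_comap_L_iff (χ : Fm) (t : W) :
    χ.props ⊆ (M.comap σ hσ).L t ↔ (χ.subst σ).props ⊆ M.L t := by
  simp only [Fm.props_subst, Set.iUnion₂_subset_iff]
  rfl

theorem mem_comap_Aw_iff (hM : M.agpp) (i : ℕ) (t : W) (χ : Fm) :
    χ ∈ (M.comap σ hσ).Aw i t ↔ χ.subst σ ∈ M.Aw i t := by
  simp only [hM i t (χ.subst σ), Fm.props_subst, Set.mem_iUnion₂]
  exact ⟨fun h x ⟨p, hp, hx⟩ => h p hp x hx, fun h p hp x hx => h x ⟨p, hp, hx⟩⟩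

theorem comap_agpp : (M.comap σ hσ).agpp := by
  intro i t χ
  show (∀ p ∈ χ.props, _) ↔ ∀ p ∈ χ.props, ∀ y ∈ Fm.props (.prop p), ∀ x ∈ (σ y).props, _
  simp [Fm.props]

theorem comap_ka (hM : M.ka) : (M.comap σ hσ).ka := by
  intro i s t hst
  simp only [comap, hM i s t hst]

open Classical in
theorem satAux_comap (hM : M.agpp) (hσq : ∀ p, (σ p).qcount = 0) (hσf : ∀ p, (σ p).free = ∅)
    {U' U : W → Fm → Prop} (hU : ∀ t γ, U' t γ ↔ U t (γ.subst σ)) (χ : Fm) (t : W) :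
    (M.comap σ hσ).satAux U' t χ ↔ M.satAux U t (χ.subst σ) := by
  induction χ generalizing t with
  | prop p =>
    rw [Fm.subst, M.satAux_congr_of_qcount_eq_zero U _ (hσq p)]
    exact ⟨fun h => of_decide_eq_true h.2,
      fun h => ⟨M.props_subset_of_satAux h, decide_eq_true h⟩⟩
  | var => rfl
  | neg _ ih => simp only [satAux, Fm.subst, props_subset_comap_L_iff, ih]
  | and _ _ ih₁ ih₂ => simp only [satAux, Fm.subst, ih₁, ih₂]
  | k _ _ ih | x _ _ ih =>
    simp only [satAux, Fm.subst, props_subset_comap_L_iff, mem_comap_Aw_iff hM, ih]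
    rfl
  | a => exact mem_comap_Aw_iff hM _ _ _
  | all v φ _ =>
    simp only [satAux, Fm.subst, props_subset_comap_L_iff, hU, Fm.subst_substV hσf]
    refine and_congr_right fun _ => ⟨fun h β hβq hβf hβL => ?_, fun h β hβq hβf hβL => ?_⟩
    · obtain ⟨g, hg⟩ := Classical.skolem.1 hσ
      have hβ := h (β.subst (.prop ∘ g)) (by rwa [Fm.qcount_subst fun _ => rfl])
        (by rwa [Fm.free_subst fun _ => rfl])
        (by rwa [Fm.subst_subst_of_rightInverse hg])
      rwa [Fm.subst_subst_of_rightInverse hg] at hβ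
    · exact h _ (by rwa [Fm.qcount_subst hσq]) (by rwa [Fm.free_subst hσf]) hβL

theorem satN_comap (hM : M.agpp) (hσq : ∀ p, (σ p).qcount = 0) (hσf : ∀ p, (σ p).free = ∅)
    (n : ℕ) (χ : Fm) (t : W) : (M.comap σ hσ).satN n t χ ↔ M.satN n t (χ.subst σ) := by
  induction n generalizing χ t with
  | zero => exact satAux_comap (U' := fun _ _ => False) hM hσq hσf (fun _ _ => Iff.rfl) χ t
  | succ n ih => exact satAux_comap hM hσq hσf (fun t γ => ih γ t) χ t

end EAS

theorem Valid.subst {φ : Fm} (hφ : Valid φ) {σ : ℕ → Fm} (hσq : ∀ p, (σ p).qcount = 0)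
    (hσf : ∀ p, (σ p).free = ∅) (hσ : ∀ x, ∃ p, σ p = .prop x) : Valid (φ.subst σ) := by
  intro W M hagpp hka s hs
  have := hφ W (M.comap σ hσ) EAS.comap_agpp (EAS.comap_ka hka) s
    ((EAS.props_subset_comap_L_iff φ s).2 hs)
  rwa [EAS.sat, EAS.satN_comap hagpp hσq hσf, ← Fm.qcount_subst hσq φ] at this

theorem stmt5_general (φ : Fm) (hv : Valid φ)
    (q : ℕ) (ψ : Fm) (hqf : Fm.qcount ψ = 0) (hψs : Fm.free ψ = ∅) :
    Valid (Fm.substP q ψ φ) := by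
  obtain ⟨N, hN⟩ := (φ.props_finite.insert q).bddAbove
  set σ : ℕ → Fm := Function.update (fun p => .prop (if p ≤ N then p else p - (N + 1))) q ψ
  have hσφ : ∀ p ∈ φ.props, σ p = Function.update Fm.prop q ψ p := by
    intro p hp
    by_cases hpq : p = q
    · simp [σ, hpq]
    · simp [σ, hpq, hN (Set.mem_insert_of_mem q hp)]
  have hσ : ∀ x, ∃ p, σ p = .prop x := by
    intro x
    have hq : q ≤ N := hN (Set.mem_insert q _)
    refine ⟨x + (N + 1), ?_⟩
    simp [σ, show x + (N + 1) ≠ q by omega, show ¬x + (N + 1) ≤ N by omega]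
  have hσq : ∀ p, (σ p).qcount = 0 := by
    intro p; by_cases hpq : p = q <;> simp [σ, hpq, hqf, Fm.qcount]
  have hσf : ∀ p, (σ p).free = ∅ := by
    intro p; by_cases hpq : p = q <;> simp [σ, hpq, hψs, Fm.free]
  rw [Fm.substP_eq_subst, ← Fm.subst_congr hσφ]
  exact hv.subst hσq hσf hσ

/-- Substitution: if the sentence `φ` is valid, `q` is a primitive proposition, and
`ψ` is a quantifier-free sentence (possibly mentioning `q`), then `φ[q/ψ]` is valid. -/
theorem stmt5 (φ : Fm) (hsent : Fm.free φ = ∅) (hv : Valid φ)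
    (q : ℕ) (ψ : Fm) (hqf : Fm.qcount ψ = 0) (hψs : Fm.free ψ = ∅) :
    Valid (Fm.substP q ψ φ) :=
  stmt5_general φ hv q ψ hqf hψs

end AwarenessPaper
end

section
/- (Soundness of Barcan*_X) The sentence (A_i(∀x φ) ∧ ∀x (A_i x ⇒ X_i φ)) ⇒ X_i(∀x A_i x ⇒ ∀x φ) is valid in the class of extended awareness structures satisfying agpp and ka. -/
namespace AwarenessPaper

/-! Awareness of `∀x φ` at `s` means, by agpp, awareness of every primitive proposition of `φ`,
hence of the consequent. At a world `t` accessible from `s`, any instance `β` with `A_i β` true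
at `t` lies in `Aw i s` by ka, so it is a sentence over `L(s)` and the premise
`∀x (A_i x ⇒ X_i φ)` at `s` gives `φ[x/β]` at `t`. Truth of `∀x φ` at `t` also needs `φ` to be
over `L(t)`: instantiating `x` by a primitive proposition `p` of `φ` makes `φ[x/p]`, which
contains `p`, true at `t`, so `p ∈ L(t)`. -/

namespace Fm

@[simp] lemma props_imp (φ ψ : Fm) : (imp φ ψ).props = φ.props ∪ ψ.props := by
  simp [imp, or, props]

@[simp] lemma qcount_imp (φ ψ : Fm) : (imp φ ψ).qcount = max φ.qcount ψ.qcount := by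
  simp [imp, or, qcount]

@[simp] lemma substV_imp (v : ℕ) (β φ ψ : Fm) :
    substV v β (imp φ ψ) = imp (substV v β φ) (substV v β ψ) := by
  simp [imp, or, substV]

lemma props_subset_props_substV (v : ℕ) (β : Fm) (φ : Fm) : φ.props ⊆ (substV v β φ).props := by
  induction φ with
  | prop p => simp [substV]
  | var u => simp [props]
  | neg φ ih | k _ φ ih | a _ φ ih | x _ φ ih => simpa [substV, props] using ih
  | and φ ψ ih₁ ih₂ => simpa [substV, props] using Set.union_subset_union ih₁ ih₂
  | all u φ ih => by_cases h : u = v <;> simp [substV, props, h, ih]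

lemma props_substV_subset (v : ℕ) (β : Fm) (φ : Fm) :
    (substV v β φ).props ⊆ φ.props ∪ β.props := by
  induction φ with
  | prop p => simp [substV]
  | var u => by_cases h : u = v <;> simp [substV, props, h]
  | neg φ ih | k _ φ ih | a _ φ ih | x _ φ ih => simpa [substV, props] using ih
  | and φ ψ ih₁ ih₂ =>
    simp only [substV, props, Set.union_subset_iff]
    exact ⟨ih₁.trans (Set.union_subset_union_left _ Set.subset_union_left),
      ih₂.trans (Set.union_subset_union_left _ Set.subset_union_right)⟩
  | all u φ ih => by_cases h : u = v <;> simp [substV, props, h, ih]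

end Fm

namespace EAS

variable {W : Type} {M : EAS W}

lemma exists_satN_eq_satAux (M : EAS W) (n : ℕ) : ∃ U, M.satN n = M.satAux U := by
  cases n <;> exact ⟨_, rfl⟩

lemma sat_iff_satAux_satN {s : W} {φ : Fm} {n : ℕ} (h : φ.qcount = n + 1) :
    M.sat s φ ↔ M.satAux (M.satN n) s φ := by
  rw [sat, h, satN]

lemma props_subset_of_satAux_s8 {U : W → Fm → Prop} {s : W} {φ : Fm} (h : M.satAux U s φ) :
    φ.props ⊆ M.L s := by
  induction φ generalizing s with
  | prop p => simpa [Fm.props] using h.1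
  | var v => exact h.elim
  | neg φ | k _ φ => exact h.1
  | and φ ψ ih₁ ih₂ => exact Set.union_subset (ih₁ h.1) (ih₂ h.2)
  | a j φ => exact M.Aw_lang j s φ h
  | x j φ => exact h.1.1
  | all v φ => exact h.1

lemma satAux_imp_iff {U : W → Fm → Prop} {s : W} {φ ψ : Fm}
    (hφ : φ.props ⊆ M.L s) (hψ : ψ.props ⊆ M.L s) :
    M.satAux U s (Fm.imp φ ψ) ↔ (M.satAux U s φ → M.satAux U s ψ) := by
  simp only [Fm.imp, Fm.or, satAux, Fm.props]
  have := Set.union_subset hφ hψ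
  tauto

lemma agpp.mem_Aw_iff_of_props_eq (h : M.agpp) {i : ℕ} {s : W} {φ ψ : Fm}
    (hprops : φ.props = ψ.props) : φ ∈ M.Aw i s ↔ ψ ∈ M.Aw i s := by
  rw [h, h i s ψ, hprops]

section BarcanX

variable {U : W → Fm → Prop} {i x : ℕ} {φ : Fm} {s : W}

lemma satAux_substV_of_satAux_all_imp_x
    (h : M.satAux (M.satAux U) s (.all x (Fm.imp (.a i (.var x)) (.x i φ))))
    {β : Fm} (hq : β.qcount = 0) (hf : β.free = ∅) (hβ : β ∈ M.Aw i s)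
    {t : W} (ht : M.R i s t) : M.satAux U t (Fm.substV x β φ) := by
  have hβL := M.Aw_lang i s β hβ
  have hφL : φ.props ⊆ M.L s := fun p hp => h.1 (by simp [Fm.props, hp])
  have hinst := h.2 β hq hf hβL
  simp only [Fm.substV_imp, Fm.substV, if_pos] at hinst
  have hφβL : (Fm.substV x β φ).props ⊆ M.L s :=
    (Fm.props_substV_subset x β φ).trans (Set.union_subset hφL hβL)
  rw [satAux_imp_iff (φ := .a i β) hβL (ψ := .x i _) hφβL] at hinst
  exact (hinst hβ).1.2 t ht

lemma props_subset_of_satAux_all_imp_x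
    (h : M.satAux (M.satAux U) s (.all x (Fm.imp (.a i (.var x)) (.x i φ))))
    (hAw : ∀ p ∈ φ.props, Fm.prop p ∈ M.Aw i s) {t : W} (ht : M.R i s t) :
    φ.props ⊆ M.L t := fun p hp =>
  props_subset_of_satAux_s8 (satAux_substV_of_satAux_all_imp_x h rfl rfl (hAw p hp) ht)
    (Fm.props_subset_props_substV x _ φ hp)

lemma satAux_all_a_imp_all_of_satAux_all_imp_x (hka : M.ka)
    (h : M.satAux (M.satAux U) s (.all x (Fm.imp (.a i (.var x)) (.x i φ))))
    (hAw : ∀ p ∈ φ.props, Fm.prop p ∈ M.Aw i s) {t : W} (ht : M.R i s t) :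
    M.satAux (M.satAux U) t (Fm.imp (.all x (.a i (.var x))) (.all x φ)) := by
  have hφt := props_subset_of_satAux_all_imp_x h hAw ht
  rw [satAux_imp_iff (by simp [Fm.props]) (ψ := .all x φ) hφt]
  refine fun hall => ⟨hφt, fun β hq hf hβL => ?_⟩
  have hβ : β ∈ M.Aw i t := by simpa [Fm.substV, satAux] using hall.2 β hq hf hβL
  exact satAux_substV_of_satAux_all_imp_x h hq hf (hka i s t ht ▸ hβ) ht

end BarcanX

end EAS

/-- Soundness of Barcan*_X:
`(A_i(∀x φ) ∧ ∀x (A_i x ⇒ X_i φ)) ⇒ X_i(∀x A_i x ⇒ ∀x φ)` is valid in the class of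
extended awareness structures satisfying agpp and ka. -/
theorem stmt8 (i : ℕ) (x : ℕ) (φ : Fm) :
    Valid (Fm.imp
      (Fm.and (.a i (.all x φ)) (.all x (Fm.imp (.a i (.var x)) (.x i φ))))
      (.x i (Fm.imp (.all x (.a i (.var x))) (.all x φ)))) := by
  intro W M hagpp hka s hs
  obtain ⟨U, hU⟩ := M.exists_satN_eq_satAux φ.qcount
  have hφ : φ.props ⊆ M.L s := fun p hp => hs (by simp [Fm.props, hp])
  rw [EAS.sat_iff_satAux_satN (n := φ.qcount) (by simp [Fm.qcount]), hU,
    EAS.satAux_imp_iff (by simpa [Fm.props]) (by simpa [Fm.props])]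
  rintro ⟨hAwAll, h⟩
  have hAw : ∀ p ∈ φ.props, Fm.prop p ∈ M.Aw i s := by
    simpa [Fm.props] using (hagpp i s _).1 hAwAll
  refine ⟨⟨by simpa [Fm.props],
    fun t ht => EAS.satAux_all_a_imp_all_of_satAux_all_imp_x hka h hAw ht⟩, ?_⟩
  exact (hagpp.mem_Aw_iff_of_props_eq (by simp [Fm.props])).1 hAwAll

end AwarenessPaper
end

section
/- (Satisfiability avoiding a proposition) If Φ is countably infinite and φ is a sentence not mentioning primitive proposition q that is satisfiable in some extended awareness structure, then φ is satisfiable in an extended awareness structure M = (S, L, π, K_1,…,K_n, A_1,…,A_n) in which q ∉ L(s) for every world s ∈ S. -/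
namespace AwarenessPaper

/-! Transport the structure along an injection `τ` of `ℕ` that fixes the (finitely many)
propositions of `φ` and misses `q`: languages, valuations and awareness sets are pushed forward
along `τ`, truth is invariant under this renaming, and `q` lies outside every transported
language. -/

namespace Fm

lemma props_finite_s10 (ψ : Fm) : ψ.props.Finite := by
  induction ψ <;> simp_all [props]

lemma props_rename (τ : ℕ → ℕ) (ψ : Fm) : (ψ.rename τ).props = τ '' ψ.props := by
  induction ψ <;> simp_all [rename, props, Set.image_union]

lemma qcount_rename (τ : ℕ → ℕ) (ψ : Fm) : (ψ.rename τ).qcount = ψ.qcount := by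
  induction ψ <;> simp_all [rename, qcount]

lemma free_rename (τ : ℕ → ℕ) (ψ : Fm) : (ψ.rename τ).free = ψ.free := by
  induction ψ <;> simp_all [rename, free]

lemma rename_rename (τ σ : ℕ → ℕ) (ψ : Fm) : (ψ.rename τ).rename σ = ψ.rename (σ ∘ τ) := by
  induction ψ <;> simp_all [rename]

lemma rename_eq_self {τ : ℕ → ℕ} {ψ : Fm} (h : ∀ p ∈ ψ.props, τ p = p) : ψ.rename τ = ψ := by
  induction ψ <;> simp_all [rename, props]

lemma rename_substV (τ : ℕ → ℕ) (v : ℕ) (β ψ : Fm) :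
    (substV v β ψ).rename τ = substV v (β.rename τ) (ψ.rename τ) := by
  induction ψ with
  | var u => by_cases h : u = v <;> simp [rename, substV, h]
  | all u φ ih => by_cases h : u = v <;> simp [rename, substV, h, ih]
  | _ => simp_all [rename, substV]

lemma rename_injective {τ : ℕ → ℕ} (hτ : τ.Injective) : (rename τ).Injective := by
  refine Function.LeftInverse.injective (g := rename (Function.invFun τ)) fun ψ => ?_
  rw [rename_rename]
  exact rename_eq_self fun p _ => Function.leftInverse_invFun hτ p

lemma exists_rename_eq {τ : ℕ → ℕ} {ψ : Fm} (h : ψ.props ⊆ Set.range τ) :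
    ∃ χ : Fm, χ.rename τ = ψ :=
  ⟨ψ.rename (Function.invFun τ), by
    rw [rename_rename]
    exact rename_eq_self fun p hp => Function.invFun_eq (h hp)⟩

lemma rename_eq_prop {τ : ℕ → ℕ} {χ : Fm} {p : ℕ} (h : χ.rename τ = prop p) :
    ∃ p₀, χ = prop p₀ ∧ τ p₀ = p := by
  cases χ <;> simp_all [rename]

end Fm

namespace EAS

variable {W : Type}

noncomputable def rename (M : EAS W) (τ : ℕ ↪ ℕ) : EAS W where
  L s := τ '' M.L s
  L_ne s := (M.L_ne s).image τ
  val s p := M.val s (Function.invFun τ p)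
  R := M.R
  Aw i s := Fm.rename τ '' M.Aw i s
  Aw_lang := by
    rintro i s _ ⟨ψ, hψ, rfl⟩
    rw [Fm.props_rename]
    exact Set.image_mono (M.Aw_lang i s ψ hψ)

variable (M : EAS W) (τ : ℕ ↪ ℕ)

lemma props_rename_subset_L_iff (s : W) (ψ : Fm) :
    (ψ.rename τ).props ⊆ (M.rename τ).L s ↔ ψ.props ⊆ M.L s := by
  rw [Fm.props_rename]
  exact Set.image_subset_image_iff τ.injective

lemma rename_mem_Aw_iff (i : ℕ) (s : W) (ψ : Fm) :
    ψ.rename τ ∈ (M.rename τ).Aw i s ↔ ψ ∈ M.Aw i s :=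
  (Fm.rename_injective τ.injective).mem_set_image

lemma satAux_rename_iff {u u' : W → Fm → Prop} (hu : ∀ s β, u' s (β.rename τ) ↔ u s β)
    (ψ : Fm) (s : W) : (M.rename τ).satAux u' s (ψ.rename τ) ↔ M.satAux u s ψ := by
  induction ψ generalizing s with
  | prop p =>
    simp only [Fm.rename, satAux, rename, τ.injective.mem_set_image,
      Function.leftInverse_invFun τ.injective p]
  | var => exact Iff.rfl
  | neg φ ih => simp only [Fm.rename, satAux, props_rename_subset_L_iff, ih]
  | and φ ψ ihφ ihψ => simp only [Fm.rename, satAux, ihφ, ihψ]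
  | k i φ ih =>
    simp only [Fm.rename, satAux, props_rename_subset_L_iff, ih]
    rfl
  | a i φ => exact rename_mem_Aw_iff M τ i s φ
  | x i φ ih =>
    simp only [Fm.rename, satAux, props_rename_subset_L_iff, ih, rename_mem_Aw_iff]
    rfl
  | all v φ =>
    simp only [Fm.rename, satAux, props_rename_subset_L_iff]
    refine and_congr_right fun _ => ⟨fun h β hq hf hL => ?_, fun h β' hq hf hL => ?_⟩
    · have := h (β.rename τ) (by rwa [Fm.qcount_rename]) (by rwa [Fm.free_rename])
        ((props_rename_subset_L_iff M τ s β).2 hL)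
      rwa [← Fm.rename_substV, hu] at this
    · -- quantified sentences over the transported language are renamings
      obtain ⟨β, rfl⟩ := Fm.exists_rename_eq (hL.trans (Set.image_subset_range _ _))
      rw [← Fm.rename_substV, hu]
      exact h β (by rwa [← Fm.qcount_rename τ]) (by rwa [← Fm.free_rename τ])
        ((props_rename_subset_L_iff M τ s β).1 hL)

lemma satN_rename_iff (n : ℕ) (s : W) (ψ : Fm) :
    (M.rename τ).satN n s (ψ.rename τ) ↔ M.satN n s ψ := by
  induction n generalizing s ψ with
  | zero => exact satAux_rename_iff M τ (fun _ _ => Iff.rfl) ψ s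
  | succ n ih => exact satAux_rename_iff M τ (fun s β => ih s β) ψ s

lemma sat_rename_iff (s : W) (ψ : Fm) : (M.rename τ).sat s (ψ.rename τ) ↔ M.sat s ψ := by
  rw [sat, sat, Fm.qcount_rename]
  exact satN_rename_iff M τ _ s ψ

lemma agpp_rename (h : M.agpp) : (M.rename τ).agpp := by
  intro i s ψ
  constructor
  · rintro ⟨ψ₀, hψ₀, rfl⟩ p hp
    rw [Fm.props_rename] at hp
    obtain ⟨p₀, hp₀, rfl⟩ := hp
    exact ⟨Fm.prop p₀, (h i s ψ₀).1 hψ₀ p₀ hp₀, rfl⟩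
  · intro hprops
    have hrange : ψ.props ⊆ Set.range τ := fun p hp => by
      obtain ⟨χ, -, hχ⟩ := hprops p hp
      obtain ⟨p₀, -, rfl⟩ := Fm.rename_eq_prop hχ
      exact ⟨p₀, rfl⟩
    obtain ⟨ψ₀, rfl⟩ := Fm.exists_rename_eq hrange
    refine (rename_mem_Aw_iff M τ i s ψ₀).2 ((h i s ψ₀).2 fun p₀ hp₀ => ?_)
    have := hprops (τ p₀) (by rw [Fm.props_rename]; exact Set.mem_image_of_mem τ hp₀)
    exact (rename_mem_Aw_iff M τ i s (Fm.prop p₀)).1 this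

lemma ka_rename (h : M.ka) : (M.rename τ).ka := fun i s t hst => by
  simp only [rename, h i s t hst]

end EAS

lemma exists_embedding_fixing_notMem_range {S : Set ℕ} (hS : S.Finite) {q : ℕ} (hq : q ∉ S) :
    ∃ τ : ℕ ↪ ℕ, (∀ p ∈ S, τ p = p) ∧ q ∉ Set.range τ := by
  classical
  obtain ⟨N, hN⟩ := (hS.insert q).bddAbove
  have hqN : q ≤ N := hN (Set.mem_insert q S)
  have hSN : ∀ p ∈ S, p ≤ N := fun p hp => hN (Set.mem_insert_of_mem q hp)
  let f : ℕ → ℕ := fun p => if p ∈ S then p else N + 1 + p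
  have hf : f.Injective := fun a b hab => by
    by_cases ha : a ∈ S <;> by_cases hb : b ∈ S <;> simp only [f, ha, hb, if_true, if_false] at hab
    · exact hab
    · have := hSN a ha; omega
    · have := hSN b hb; omega
    · omega
  refine ⟨⟨f, hf⟩, fun p hp => if_pos hp, ?_⟩
  rintro ⟨p, hp⟩
  by_cases h : p ∈ S
  · simp only [Function.Embedding.coeFn_mk, f, h, if_true] at hp
    exact hq (hp ▸ h)
  · simp only [Function.Embedding.coeFn_mk, f, h, if_false] at hp
    omega

theorem stmt10_general (φ : Fm) (q : ℕ) (hq : q ∉ Fm.props φ)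
    (hsat : ∃ (W : Type) (M : EAS W), M.agpp ∧ M.ka ∧ ∃ s : W, M.sat s φ) :
    ∃ (W : Type) (M : EAS W), M.agpp ∧ M.ka ∧ (∃ s : W, M.sat s φ) ∧
      ∀ t : W, q ∉ M.L t := by
  obtain ⟨W, M, hagpp, hka, s, hs⟩ := hsat
  obtain ⟨τ, hfix, hqτ⟩ := exists_embedding_fixing_notMem_range φ.props_finite_s10 hq
  refine ⟨W, M.rename τ, M.agpp_rename τ hagpp, M.ka_rename τ hka, ⟨s, ?_⟩, ?_⟩
  · rw [← Fm.rename_eq_self hfix]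
    exact (M.sat_rename_iff τ s φ).2 hs
  · rintro t ⟨p, -, hp⟩
    exact hqτ ⟨p, hp⟩

/-- Satisfiability avoiding a proposition: a satisfiable sentence not mentioning `q`
is satisfiable in a structure in which `q` is in no local language. -/
theorem stmt10 (φ : Fm) (hsent : Fm.free φ = ∅) (q : ℕ) (hq : q ∉ Fm.props φ)
    (hsat : ∃ (W : Type) (M : EAS W), M.agpp ∧ M.ka ∧ ∃ s : W, M.sat s φ) :
    ∃ (W : Type) (M : EAS W), M.agpp ∧ M.ka ∧ (∃ s : W, M.sat s φ) ∧
      ∀ t : W, q ∉ M.L t :=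
  stmt10_general φ q hq hsat

end AwarenessPaper
end

section
/- (Finite sets are acceptable) If Φ is countably infinite and Γ is a finite set of sentences, then Γ is acceptable with respect to every subset L ⊆ Φ containing infinitely many primitive propositions: whenever φ is a formula over L with one free variable x and Γ ⊢ φ[x/q] for all but finitely many primitive propositions q ∈ L, then Γ ⊢ ∀x φ. -/
namespace AwarenessPaper

namespace Fm

/-- Primitive propositions of a formula, as a list. -/
def propList : Fm → List ℕ
  | .prop p => [p]
  | .var _ => []
  | .neg φ => propList φ
  | .and φ ψ => propList φ ++ propList ψ
  | .k _ φ => propList φ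
  | .a _ φ => propList φ
  | .x _ φ => propList φ
  | .all _ φ => propList φ

def top : Fm := Fm.or (.prop 0) (.neg (.prop 0))
def bot : Fm := .neg top

/-- Boolean evaluation of the propositional skeleton of a formula, treating
everything other than `¬` and `∧` as an atom.  `∀ v, beval v φ = true` says
exactly that `φ` is a substitution instance of a propositional tautology. -/
def beval (v : Fm → Bool) : Fm → Bool
  | .neg φ => ! beval v φ
  | .and φ ψ => beval v φ && beval v ψ
  | φ => v φ

end Fm

/-- Conjunction of a list of formulas (the empty conjunction is `⊤`). -/
def conj : List Fm → Fm
  | [] => Fm.top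
  | φ :: l => Fm.and φ (conj l)

/-- The theorems of the axiom system `AX^{X,A,∀}_e`:
Prop, AGPP, XA, FA*_X, K_X, A0_X, 1_∀, K_∀, N_∀, Barcan*_X, MP, Gen_X, Gen_∀. -/
inductive Thm : Fm → Prop
  | taut (φ : Fm) (h : ∀ v : Fm → Bool, Fm.beval v φ = true) : Thm φ
  | agppAx (i : ℕ) (φ : Fm) :
      Thm (Fm.iff (.a i φ) (conj ((Fm.propList φ).map fun p => Fm.a i (.prop p))))
  | xaAx (i : ℕ) (φ : Fm) : Thm (Fm.imp (.a i φ) (.x i (.a i φ)))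
  | faAx (i x : ℕ) :
      Thm (Fm.imp (.all x (.neg (.a i (.var x)))) (.x i (.all x (.neg (.a i (.var x))))))
  | kAx (i : ℕ) (φ ψ : Fm) :
      Thm (Fm.imp (.and (.x i φ) (.x i (Fm.imp φ ψ))) (.x i ψ))
  | a0Ax (i : ℕ) (φ : Fm) : Thm (Fm.imp (.x i φ) (.a i φ))
  | oneAll (x : ℕ) (φ ψ : Fm) (h1 : Fm.qcount ψ = 0) (h2 : Fm.free ψ = ∅) :
      Thm (Fm.imp (.all x φ) (Fm.substV x ψ φ))
  | kAll (x : ℕ) (φ ψ : Fm) :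
      Thm (Fm.imp (.all x (Fm.imp φ ψ)) (Fm.imp (.all x φ) (.all x ψ)))
  | nAll (x : ℕ) (φ : Fm) (h : x ∉ Fm.free φ) : Thm (Fm.imp φ (.all x φ))
  | barcanAx (i x : ℕ) (φ : Fm) :
      Thm (Fm.imp (.and (.a i (.all x φ)) (.all x (Fm.imp (.a i (.var x)) (.x i φ))))
                  (.x i (Fm.imp (.all x (.a i (.var x))) (.all x φ))))
  | mp (φ ψ : Fm) : Thm (Fm.imp φ ψ) → Thm φ → Thm ψ
  | genX (i : ℕ) (φ : Fm) : Thm φ → Thm (Fm.imp (.a i φ) (.x i φ))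
  | genAll (x q : ℕ) (φ : Fm) : Thm φ → Thm (.all x (Fm.substP q (.var x) φ))

/-- `Γ ⊢ φ`: derivable from finitely many members of `Γ` and theorems of
`AX^{X,A,∀}_e` by modus ponens. -/
def Derivable (Γ : Set Fm) (φ : Fm) : Prop :=
  ∃ l : List Fm, (∀ ψ ∈ l, ψ ∈ Γ) ∧ Thm (Fm.imp (conj l) φ)

def Consistent (Γ : Set Fm) : Prop := ¬ Derivable Γ Fm.bot

/-- `Γ` is acceptable with respect to `L`: whenever `φ` is a formula over `L`
with (at most) the free variable `x` and `Γ ⊢ φ[x/q]` for all but finitely many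
primitive propositions `q ∈ L`, then `Γ ⊢ ∀x φ`. -/
def Acceptable (Γ : Set Fm) (L : Set ℕ) : Prop :=
  ∀ (x : ℕ) (φ : Fm), Fm.props φ ⊆ L → Fm.free φ ⊆ {x} →
    {q ∈ L | ¬ Derivable Γ (Fm.substV x (.prop q) φ)}.Finite →
    Derivable Γ (.all x φ)

/-- `Γ` is a maximal consistent set of sentences with respect to `L`. -/
def MaxConsistent (Γ : Set Fm) (L : Set ℕ) : Prop :=
  (∀ φ ∈ Γ, Fm.props φ ⊆ L ∧ Fm.free φ = ∅) ∧ Consistent Γ ∧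
    ∀ φ : Fm, Fm.props φ ⊆ L → Fm.free φ = ∅ → Consistent (insert φ Γ) → φ ∈ Γ


/-!
Since `Γ` and `φ` mention only finitely many primitive propositions and `L` is infinite, some
`q ∈ L` with `Γ ⊢ φ[x/q]` occurs in neither. Such a `q` behaves like a fresh variable: `Gen_∀`
turns `⊢ ⋀Γ ⇒ φ[x/q]` into `⊢ ∀x (⋀Γ ⇒ φ)`, and `K_∀` with `N_∀` (the members of `Γ` are
sentences) gives `⊢ ⋀Γ ⇒ ∀x φ`.
-/

namespace Fm

lemma props_finite_s15 : ∀ φ : Fm, (props φ).Finite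
  | .prop p => Set.finite_singleton p
  | .var _ => Set.finite_empty
  | .neg φ => props_finite_s15 φ
  | .and φ ψ => (props_finite_s15 φ).union (props_finite_s15 ψ)
  | .k _ φ => props_finite_s15 φ
  | .a _ φ => props_finite_s15 φ
  | .x _ φ => props_finite_s15 φ
  | .all _ φ => props_finite_s15 φ

lemma substP_eq_self {q : ℕ} (ψ : Fm) {φ : Fm} (hq : q ∉ props φ) : substP q ψ φ = φ := by
  induction φ with
  | prop p => grind [props, substP]
  | _ => simp_all [props, substP]

lemma substP_var_substV_prop {q : ℕ} (y : ℕ) {φ : Fm} (hq : q ∉ props φ) :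
    substP q (.var y) (substV y (.prop q) φ) = φ := by
  induction φ with
  | prop p => grind [props, substV, substP]
  | var u => by_cases hu : u = y <;> simp [substV, substP, hu]
  | all u φ ih =>
    by_cases hu : u = y
    · simp_all [props, substV, substP_eq_self]
    · simp_all [props, substV, substP]
  | _ => simp_all [props, substV, substP]

end Fm

lemma free_conj (l : List Fm) (h : ∀ ψ ∈ l, Fm.free ψ = ∅) : Fm.free (conj l) = ∅ := by
  induction l with
  | nil => simp [conj, Fm.top, Fm.or, Fm.free]
  | cons φ l ih => simp_all [conj, Fm.free]

-- `conj [] = ⊤` is built from the primitive proposition `0`, so `0` is never fresh.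
lemma props_conj_subset (l : List Fm) : Fm.props (conj l) ⊆ {0} ∪ ⋃ ψ ∈ l, Fm.props ψ := by
  induction l with
  | nil => simp [conj, Fm.top, Fm.or, Fm.props]
  | cons φ l ih =>
    simp only [conj, Fm.props, List.mem_cons, Set.iUnion_iUnion_eq_or_left]
    exact Set.union_subset (fun p hp => .inr (.inl hp))
      (ih.trans (Set.union_subset_union_right _ Set.subset_union_right))

lemma Thm.imp_trans {A B C : Fm} (hAB : Thm (Fm.imp A B)) (hBC : Thm (Fm.imp B C)) :
    Thm (Fm.imp A C) := by
  have syllogism : Thm (Fm.imp (Fm.imp A B) (Fm.imp (Fm.imp B C) (Fm.imp A C))) := by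
    refine Thm.taut _ fun v => ?_
    simp only [Fm.imp, Fm.or, Fm.beval]
    cases Fm.beval v A <;> cases Fm.beval v B <;> cases Fm.beval v C <;> rfl
  exact Thm.mp _ _ (Thm.mp _ _ syllogism hAB) hBC

theorem derivable_all_of_derivable_substV {Γ : Set Fm} (hsent : ∀ ψ ∈ Γ, Fm.free ψ = ∅)
    {x q : ℕ} {φ : Fm} (hq0 : q ≠ 0) (hqφ : q ∉ Fm.props φ) (hqΓ : ∀ ψ ∈ Γ, q ∉ Fm.props ψ)
    (h : Derivable Γ (Fm.substV x (.prop q) φ)) : Derivable Γ (.all x φ) := by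
  obtain ⟨l, hlΓ, hl⟩ := h
  refine ⟨l, hlΓ, ?_⟩
  have hq_conj : q ∉ Fm.props (conj l) := fun hq => by
    rcases props_conj_subset l hq with hq | hq
    · exact hq0 hq
    · obtain ⟨ψ, hψ, hqψ⟩ := Set.mem_iUnion₂.1 hq
      exact hqΓ ψ (hlΓ ψ hψ) hqψ
  have gen : Thm (.all x (Fm.imp (conj l) φ)) := by
    simpa only [Fm.imp, Fm.or, Fm.substP, Fm.substP_eq_self _ hq_conj,
      Fm.substP_var_substV_prop x hqφ] using Thm.genAll x q _ hl
  have sentence : x ∉ Fm.free (conj l) := by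
    rw [free_conj l fun ψ hψ => hsent ψ (hlΓ ψ hψ)]
    exact Set.notMem_empty x
  exact (Thm.nAll x _ sentence).imp_trans (Thm.mp _ _ (Thm.kAll x _ φ) gen)

/-- Finite sets of sentences are acceptable with respect to every infinite `L ⊆ Φ`. -/
theorem stmt15 (Γ : Set Fm) (hfin : Γ.Finite) (hsent : ∀ φ ∈ Γ, Fm.free φ = ∅)
    (L : Set ℕ) (hL : L.Infinite) :
    Acceptable Γ L := by
  intro x φ _ _ hbad
  have hexcluded : ({q ∈ L | ¬ Derivable Γ (Fm.substV x (.prop q) φ)} ∪ Fm.props φ ∪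
      (⋃ ψ ∈ Γ, Fm.props ψ) ∪ {0}).Finite :=
    ((hbad.union φ.props_finite_s15).union (hfin.biUnion fun ψ _ => ψ.props_finite_s15)).union
      (Set.finite_singleton 0)
  obtain ⟨q, hqL, hq⟩ := (hL.sdiff hexcluded).nonempty
  simp only [Set.mem_union, Set.mem_singleton_iff, Set.mem_iUnion, not_or, not_exists] at hq
  obtain ⟨⟨⟨hq_good, hqφ⟩, hqΓ⟩, hq0⟩ := hq
  exact derivable_all_of_derivable_substV hsent hq0 hqφ hqΓ (not_not.1 fun h => hq_good ⟨hqL, h⟩)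

end AwarenessPaper
end
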